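/- Let a be a continuous activation function, u, n ∈ ℕ, h₁,…,h_u ∈ ℝ, and let Θ¹,…,Θ^u be ResNets of length n such that for each i the i-th residual blocks of all Θ^j have the same layer-dimension vector. Then there exists a ResNet ψ such that (𝓡_a ψ)(x₀) = Σ_{j=1}^u h_j (𝓡_a Θ^j)(x₀) for all x₀ ∈ ℝ^{d₀}, and 𝓟(ψ) ≤ u² 𝓟(Θ¹). -/
import Mathlib


noncomputable section

open Finset

/-- Partial sums used as offsets for block constructions. -/
def offset (f : ℕ → ℕ) (m : ℕ) : ℕ := ∑ t ∈ Finset.range m, f t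

/-- Concatenation of a family of vectors (given as functions `ℕ → ℝ`) along block offsets. -/
def concatV (u : ℕ) (sizes : ℕ → ℕ) (x : ℕ → ℕ → ℝ) : ℕ → ℝ :=
  fun i => ∑ m ∈ Finset.range u,
    if offset sizes m ≤ i ∧ i < offset sizes (m + 1) then x m (i - offset sizes m) else 0

/-- Matrix-vector multiplication, truncated to the first `n` coordinates of `x`. -/
def mulVecN (n : ℕ) (Wc : ℕ → ℕ → ℝ) (x : ℕ → ℝ) : ℕ → ℝ :=
  fun i => ∑ j ∈ Finset.range n, Wc i j * x j

/-- A feedforward neural network (FNN) with `depth + 1` affine layers; layer `k`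
(for `0 ≤ k ≤ depth`) maps `ℝ^{dims k}` to `ℝ^{dims (k+1)}` via the weight matrix
`W k` and the bias vector `B k`. -/
structure FNN where
  depth : ℕ
  dims : ℕ → ℕ
  W : ℕ → ℕ → ℕ → ℝ
  B : ℕ → ℕ → ℝ

namespace FNN

/-- Input dimension `I(θ)`. -/
def inp (θ : FNN) : ℕ := θ.dims 0

/-- Output dimension `O(θ)`. -/
def out (θ : FNN) : ℕ := θ.dims (θ.depth + 1)

/-- Number of parameters `P(θ) = Σ_{k=1}^{L} l_k (l_{k-1} + 1)`. -/
def params (θ : FNN) : ℕ :=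
  ∑ k ∈ Finset.range (θ.depth + 1), θ.dims (k + 1) * (θ.dims k + 1)

/-- The layer-dimension vector `(l₀, l₁, …, l_L)` of `θ`. -/
def arch (θ : FNN) : List ℕ := (List.range (θ.depth + 2)).map θ.dims

/-- The affine map of layer `k`. -/
def affine (θ : FNN) (k : ℕ) (x : ℕ → ℝ) : ℕ → ℝ :=
  fun i => (∑ j ∈ Finset.range (θ.dims k), θ.W k i j * x j) + θ.B k i

/-- The result of applying the first `k` activated layers to the input. -/
def hidden (a : ℝ → ℝ) (θ : FNN) : ℕ → (ℕ → ℝ) → ℕ → ℝ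
  | 0 => fun x => x
  | k + 1 => fun x i => a (affine θ k (hidden a θ k x) i)

/-- The realization `R_a θ` of the FNN `θ` with activation `a`: all layers but the
last one are composed with the componentwise activation. -/
def realize (a : ℝ → ℝ) (θ : FNN) (x : ℕ → ℝ) : ℕ → ℝ :=
  affine θ θ.depth (hidden a θ θ.depth x)

/-- The standard composition `θ₂ • θ₁` of two FNNs: the last affine map of `θ₁` is
merged with the first affine map of `θ₂`. -/
def comp (θ₂ θ₁ : FNN) : FNN where
  depth := θ₁.depth + θ₂.depth
  dims := fun k => if k ≤ θ₁.depth then θ₁.dims k else θ₂.dims (k - θ₁.depth)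
  W := fun k i j =>
    if k < θ₁.depth then θ₁.W k i j
    else if k = θ₁.depth then
      ∑ r ∈ Finset.range (θ₂.dims 0), θ₂.W 0 i r * θ₁.W θ₁.depth r j
    else θ₂.W (k - θ₁.depth) i j
  B := fun k i =>
    if k < θ₁.depth then θ₁.B k i
    else if k = θ₁.depth then
      (∑ r ∈ Finset.range (θ₂.dims 0), θ₂.W 0 i r * θ₁.B θ₁.depth r) + θ₂.B 0 i
    else θ₂.B (k - θ₁.depth) i

/-- Parallelization `P_u(θ₀, …, θ_{u-1})` of FNNs of equal depth: block-diagonal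
weight matrices and concatenated bias vectors. -/
def parallel (u : ℕ) (θ : ℕ → FNN) : FNN where
  depth := (θ 0).depth
  dims := fun k => ∑ m ∈ Finset.range u, (θ m).dims k
  W := fun k i j =>
    ∑ m ∈ Finset.range u,
      if offset (fun t => (θ t).dims (k + 1)) m ≤ i ∧
         i < offset (fun t => (θ t).dims (k + 1)) (m + 1) ∧
         offset (fun t => (θ t).dims k) m ≤ j ∧
         j < offset (fun t => (θ t).dims k) (m + 1) then
        (θ m).W k (i - offset (fun t => (θ t).dims (k + 1)) m)
          (j - offset (fun t => (θ t).dims k) m)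
      else 0
  B := fun k i =>
    ∑ m ∈ Finset.range u,
      if offset (fun t => (θ t).dims (k + 1)) m ≤ i ∧
         i < offset (fun t => (θ t).dims (k + 1)) (m + 1) then
        (θ m).B k (i - offset (fun t => (θ t).dims (k + 1)) m)
      else 0

/-- `𝒲 ⊛ θ`: replace the last layer `(W_L, B_L)` of `θ` by `(𝒲 W_L, 𝒲 B_L)`,
where `𝒲 ∈ ℝ^{m × O(θ)}`. -/
def matMulLeft (θ : FNN) (m : ℕ) (Wc : ℕ → ℕ → ℝ) : FNN where
  depth := θ.depth
  dims := fun k => if k = θ.depth + 1 then m else θ.dims k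
  W := fun k i j =>
    if k = θ.depth then ∑ r ∈ Finset.range θ.out, Wc i r * θ.W k r j else θ.W k i j
  B := fun k i =>
    if k = θ.depth then ∑ r ∈ Finset.range θ.out, Wc i r * θ.B k r else θ.B k i

/-- `θ ⊛ 𝕎`: replace the first layer `(W₁, B₁)` of `θ` by `(W₁ 𝕎, B₁)`,
where `𝕎 ∈ ℝ^{I(θ) × n}`. -/
def matMulRight (θ : FNN) (n : ℕ) (Wc : ℕ → ℕ → ℝ) : FNN where
  depth := θ.depth
  dims := fun k => if k = 0 then n else θ.dims k
  W := fun k i j =>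
    if k = 0 then ∑ r ∈ Finset.range (θ.dims 0), θ.W 0 i r * Wc r j else θ.W k i j
  B := θ.B

/-- Scale the last affine layer of `θ` by `c` and add the vector `v` to the last bias:
`θ' = ((W₁,B₁),…,(W_{L−1},B_{L−1}),(c W_L, c B_L + v))`. -/
def scaleShift (θ : FNN) (c : ℝ) (v : ℕ → ℝ) : FNN where
  depth := θ.depth
  dims := θ.dims
  W := fun k i j => if k = θ.depth then c * θ.W k i j else θ.W k i j
  B := fun k i => if k = θ.depth then c * θ.B k i + v i else θ.B k i

end FNN

/-- A residual neural network (ResNet): a sequence of `n` residual blocks, each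
consisting of an FNN `blocks i` together with a shortcut matrix `Γ i`. -/
structure ResNet where
  n : ℕ
  blocks : ℕ → FNN
  Γ : ℕ → ℕ → ℕ → ℝ

namespace ResNet

/-- The intermediate states `x_i = Γ_i x_{i−1} + (R_a θ_i)(x_{i−1})` of the
realization of a ResNet. -/
def state (a : ℝ → ℝ) (Θ : ResNet) (x : ℕ → ℝ) : ℕ → ℕ → ℝ
  | 0 => x
  | i + 1 => fun r =>
      mulVecN (Θ.blocks i).inp (Θ.Γ i) (state a Θ x i) r +
        FNN.realize a (Θ.blocks i) (state a Θ x i) r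

/-- The realization `𝓡_a Θ` of a ResNet. -/
def realize (a : ℝ → ℝ) (Θ : ResNet) (x : ℕ → ℝ) : ℕ → ℝ := state a Θ x Θ.n

/-- The complexity `𝓟(Θ) = Σ_i (P(θ_i) + d_i d_{i−1})` of a ResNet. -/
def complexity (Θ : ResNet) : ℕ :=
  ∑ i ∈ Finset.range Θ.n, ((Θ.blocks i).params + (Θ.blocks i).out * (Θ.blocks i).inp)

/-- The composition `Θ² • Θ¹` of two ResNets: concatenation of the blocks. -/
def comp (Θ₂ Θ₁ : ResNet) : ResNet where
  n := Θ₁.n + Θ₂.n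
  blocks := fun k => if k < Θ₁.n then Θ₁.blocks k else Θ₂.blocks (k - Θ₁.n)
  Γ := fun k => if k < Θ₁.n then Θ₁.Γ k else Θ₂.Γ (k - Θ₁.n)

/-- The composition `φ ◇ Θ` of a ResNet `Θ` with an FNN `φ`: append `φ` as a final
residual block whose shortcut matrix is zero. -/
def appendFNN (Θ : ResNet) (φ : FNN) : ResNet where
  n := Θ.n + 1
  blocks := fun k => if k < Θ.n then Θ.blocks k else φ
  Γ := fun k => if k < Θ.n then Θ.Γ k else fun _ _ => 0

/-- The parallelization `ℙ_u(Θ⁰, …, Θ^{u-1})` of ResNets with identical architectures: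
block-diagonal shortcut matrices and parallelized residual blocks. -/
def parallel (u : ℕ) (Θ : ℕ → ResNet) : ResNet where
  n := (Θ 0).n
  blocks := fun i => FNN.parallel u (fun j => (Θ j).blocks i)
  Γ := fun i r s =>
    ∑ m ∈ Finset.range u,
      if offset (fun t => ((Θ t).blocks i).out) m ≤ r ∧
         r < offset (fun t => ((Θ t).blocks i).out) (m + 1) ∧
         offset (fun t => ((Θ t).blocks i).inp) m ≤ s ∧
         s < offset (fun t => ((Θ t).blocks i).inp) (m + 1) then
        (Θ m).Γ i (r - offset (fun t => ((Θ t).blocks i).out) m)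
          (s - offset (fun t => ((Θ t).blocks i).inp) m)
      else 0

end ResNet

/-- The perturbed Euler–Maruyama sequence `y₀ = x`, `y_{i+1} = y_i + c_i Φ(y_i) + v_i`,
where `Φ = R_a φ`. -/
def emSeq (a : ℝ → ℝ) (φ : FNN) (c : ℕ → ℝ) (v : ℕ → ℕ → ℝ) (x : ℕ → ℝ) : ℕ → ℕ → ℝ
  | 0 => x
  | i + 1 => fun r =>
      emSeq a φ c v x i r + c i * FNN.realize a φ (emSeq a φ c v x i) r + v i r

/-- The Euler–Maruyama-type ResNet `ψ = (I_d, φ₁, …, I_d, φ_N)` with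
`N = ⌊T/δ²⌋ + 1`, identity shortcut matrices, blocks `φ_i` obtained from `φ` by
scaling the last layer by the stepsize `δ²` (respectively `T − δ²⌊T/δ²⌋` for the
last block) and adding `v i` to the last bias. -/
def eulerResNet (φ : FNN) (δ T : ℝ) (v : ℕ → ℕ → ℝ) : ResNet where
  n := Nat.floor (T / δ ^ 2) + 1
  blocks := fun i =>
    FNN.scaleShift φ
      (if i + 1 < Nat.floor (T / δ ^ 2) + 1 then δ ^ 2
       else T - δ ^ 2 * (Nat.floor (T / δ ^ 2) : ℝ)) (v i)
  Γ := fun _ r s => if r = s then 1 else 0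

/-- Embedding of `ℝ^d` into `ℕ → ℝ` by padding with zeros. -/
def embed (d : ℕ) (x : Fin d → ℝ) : ℕ → ℝ :=
  fun i => if h : i < d then x ⟨i, h⟩ else 0

section Aux

lemma offset_mono (f : ℕ → ℕ) {a b : ℕ} (hab : a ≤ b) : offset f a ≤ offset f b :=
  Finset.sum_le_sum_of_subset (Finset.range_subset_range.2 hab)

lemma offset_succ (f : ℕ → ℕ) (m : ℕ) : offset f (m + 1) = offset f m + f m :=
  Finset.sum_range_succ f m

lemma offset_congr {f g : ℕ → ℕ} {m : ℕ} (h : ∀ t < m, f t = g t) :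
    offset f m = offset g m :=
  Finset.sum_congr rfl fun t ht => h t (Finset.mem_range.1 ht)

lemma mem_block_left (f : ℕ → ℕ) (m j : ℕ) : offset f m ≤ offset f m + j :=
  Nat.le_add_right _ _

lemma mem_block_right (f : ℕ → ℕ) {m j : ℕ} (hj : j < f m) :
    offset f m + j < offset f (m + 1) := by
  rw [offset_succ]; omega

lemma block_uniq (f : ℕ → ℕ) {m m' r : ℕ} (h1 : offset f m ≤ r) (h2 : r < offset f (m + 1))
    (h3 : offset f m' ≤ r) (h4 : r < offset f (m' + 1)) : m = m' := by
  by_contra hne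
  rcases Nat.lt_or_ge m m' with hlt | hge
  · have : offset f (m + 1) ≤ offset f m' := offset_mono f hlt
    omega
  · have hlt : m' < m := lt_of_le_of_ne hge (Ne.symm hne)
    have : offset f (m' + 1) ≤ offset f m := offset_mono f hlt
    omega

/-- Split a sum over `range (offset f u)` into blocks. -/
lemma sum_range_offset {M : Type*} [AddCommMonoid M] (f : ℕ → ℕ) (u : ℕ) (g : ℕ → M) :
    ∑ i ∈ Finset.range (offset f u), g i
      = ∑ m ∈ Finset.range u, ∑ j ∈ Finset.range (f m), g (offset f m + j) := by
  induction u with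
  | zero => simp [offset]
  | succ u ih =>
      rw [offset_succ, Finset.sum_range_add, ih, Finset.sum_range_succ]

/-- A sum of block indicators evaluated inside block `m` picks out the `m`-th term. -/
lemma sum_if_block {M : Type*} [AddCommMonoid M] (f : ℕ → ℕ) {u m j : ℕ} (hm : m < u)
    (hj : j < f m) (g : ℕ → M) :
    (∑ m' ∈ Finset.range u,
        if offset f m' ≤ offset f m + j ∧ offset f m + j < offset f (m' + 1) then g m'
        else 0) = g m := by
  rw [Finset.sum_eq_single m]
  · rw [if_pos ⟨mem_block_left f m j, mem_block_right f hj⟩]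
  · intro m' _ hne
    rw [if_neg]
    rintro ⟨c1, c2⟩
    exact hne (block_uniq f c1 c2 (mem_block_left f m j) (mem_block_right f hj))
  · intro hmem; exact absurd (Finset.mem_range.2 hm) hmem

end Aux
section AuxFNN

variable (a : ℝ → ℝ) (θ : ℕ → FNN) (u : ℕ)

lemma parallel_dims (k : ℕ) :
    (FNN.parallel u θ).dims k = offset (fun t => (θ t).dims k) u := rfl

lemma parallel_W_apply {k m m' i j : ℕ} (hm : m < u) (hm' : m' < u)
    (hi : i < (θ m).dims (k + 1)) (hj : j < (θ m').dims k) :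
    (FNN.parallel u θ).W k (offset (fun t => (θ t).dims (k + 1)) m + i)
        (offset (fun t => (θ t).dims k) m' + j)
      = if m = m' then (θ m).W k i j else 0 := by
  show (∑ m'' ∈ Finset.range u, _) = _
  rw [Finset.sum_eq_single m]
  · rcases eq_or_ne m m' with rfl | hne
    · rw [if_pos ⟨mem_block_left _ m i, mem_block_right _ hi,
        mem_block_left _ m j, mem_block_right _ hj⟩, if_pos rfl]
      simp
    · rw [if_neg, if_neg hne]
      rintro ⟨-, -, c3, c4⟩
      exact hne (block_uniq _ c3 c4 (mem_block_left _ m' j) (mem_block_right _ hj))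
  · intro m'' _ hne
    rw [if_neg]
    rintro ⟨c1, c2, -, -⟩
    exact hne (block_uniq _ c1 c2 (mem_block_left _ m i) (mem_block_right _ hi))
  · intro hmem; exact absurd (Finset.mem_range.2 hm) hmem

lemma parallel_B_apply {k m i : ℕ} (hm : m < u) (hi : i < (θ m).dims (k + 1)) :
    (FNN.parallel u θ).B k (offset (fun t => (θ t).dims (k + 1)) m + i)
      = (θ m).B k i := by
  show (∑ m'' ∈ Finset.range u, _) = _
  have := sum_if_block (fun t => (θ t).dims (k + 1)) hm hi
    (fun m'' => (θ m'').B k (offset (fun t => (θ t).dims (k + 1)) m + i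
      - offset (fun t => (θ t).dims (k + 1)) m''))
  rw [this]
  simp

lemma affine_parallel {k m i : ℕ} (hm : m < u) (hi : i < (θ m).dims (k + 1))
    (z : ℕ → ℝ) (y : ℕ → ℕ → ℝ)
    (hz : ∀ m' < u, ∀ j < (θ m').dims k,
      z (offset (fun t => (θ t).dims k) m' + j) = y m' j) :
    FNN.affine (FNN.parallel u θ) k z (offset (fun t => (θ t).dims (k + 1)) m + i)
      = FNN.affine (θ m) k (y m) i := by
  unfold FNN.affine
  rw [parallel_dims, parallel_B_apply θ u hm hi, sum_range_offset]
  congr 1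
  rw [Finset.sum_eq_single m]
  · apply Finset.sum_congr rfl
    intro j hj
    rw [parallel_W_apply θ u hm hm hi (Finset.mem_range.1 hj), if_pos rfl,
      hz m hm j (Finset.mem_range.1 hj)]
  · intro m' hm'r hne
    apply Finset.sum_eq_zero
    intro j hj
    rw [parallel_W_apply θ u hm (Finset.mem_range.1 hm'r) hi (Finset.mem_range.1 hj),
      if_neg (Ne.symm hne), zero_mul]
  · intro hmem; exact absurd (Finset.mem_range.2 hm) hmem

lemma hidden_parallel (z : ℕ → ℝ) (y : ℕ → ℕ → ℝ)
    (hz : ∀ m' < u, ∀ j < (θ m').dims 0,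
      z (offset (fun t => (θ t).dims 0) m' + j) = y m' j) :
    ∀ k, ∀ m < u, ∀ j < (θ m).dims k,
      FNN.hidden a (FNN.parallel u θ) k z (offset (fun t => (θ t).dims k) m + j)
        = FNN.hidden a (θ m) k (y m) j := by
  intro k
  induction k with
  | zero => exact hz
  | succ k ih =>
      intro m hm j hj
      show a _ = a _
      congr 1
      exact affine_parallel θ u hm hj _ _ (fun m' hm' j' hj' => ih m' hm' j' hj')

lemma realize_parallel {m i : ℕ} (hm : m < u)
    (hdepth : ∀ m' < u, (θ m').depth = (θ 0).depth)
    (hi : i < (θ m).dims ((θ m).depth + 1))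
    (z : ℕ → ℝ) (y : ℕ → ℕ → ℝ)
    (hz : ∀ m' < u, ∀ j < (θ m').dims 0,
      z (offset (fun t => (θ t).dims 0) m' + j) = y m' j) :
    FNN.realize a (FNN.parallel u θ) z
        (offset (fun t => (θ t).dims ((θ 0).depth + 1)) m + i)
      = FNN.realize a (θ m) (y m) i := by
  unfold FNN.realize
  have hdm := hdepth m hm
  have h1 : ∀ m' < u, ∀ j < (θ m').dims (θ m).depth,
      FNN.hidden a (FNN.parallel u θ) (θ m).depth z
          (offset (fun t => (θ t).dims (θ m).depth) m' + j)
        = FNN.hidden a (θ m') (θ m).depth (y m') j :=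
    fun m' hm' j hj => hidden_parallel a θ u z y hz _ m' hm' j hj
  have h2 := affine_parallel θ u hm hi
      (FNN.hidden a (FNN.parallel u θ) (θ m).depth z)
      (fun m' => FNN.hidden a (θ m') (θ m).depth (y m')) h1
  have hpd : (FNN.parallel u θ).depth = (θ m).depth := hdm.symm
  rw [hpd]
  have hoff : offset (fun t => (θ t).dims ((θ 0).depth + 1)) m
      = offset (fun t => (θ t).dims ((θ m).depth + 1)) m := by rw [hdm]
  rw [hoff]
  exact h2

end AuxFNN
section AuxMat

variable (a : ℝ → ℝ) (θ : FNN)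

lemma affine_matMulRight_zero (n : ℕ) (Wc : ℕ → ℕ → ℝ) (x : ℕ → ℝ) :
    FNN.affine (θ.matMulRight n Wc) 0 x = FNN.affine θ 0 (mulVecN n Wc x) := by
  funext i
  unfold FNN.affine FNN.matMulRight mulVecN
  simp only [if_pos rfl, if_true]
  congr 1
  simp only [Finset.sum_mul, Finset.mul_sum, mul_assoc]
  rw [Finset.sum_comm]

lemma affine_matMulRight_succ (n : ℕ) (Wc : ℕ → ℕ → ℝ) (k : ℕ) (x : ℕ → ℝ) :
    FNN.affine (θ.matMulRight n Wc) (k + 1) x = FNN.affine θ (k + 1) x := by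
  funext i
  unfold FNN.affine FNN.matMulRight
  simp

lemma hidden_matMulRight (n : ℕ) (Wc : ℕ → ℕ → ℝ) (x : ℕ → ℝ) (k : ℕ) :
    FNN.hidden a (θ.matMulRight n Wc) (k + 1) x
      = FNN.hidden a θ (k + 1) (mulVecN n Wc x) := by
  induction k with
  | zero =>
      funext i
      show a _ = a _
      rw [show FNN.hidden a (θ.matMulRight n Wc) 0 x = x from rfl,
        affine_matMulRight_zero θ n Wc x]
      rfl
  | succ k ih =>
      funext i
      show a _ = a _
      rw [ih, affine_matMulRight_succ θ n Wc k]

lemma realize_matMulRight (n : ℕ) (Wc : ℕ → ℕ → ℝ) (x : ℕ → ℝ) :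
    FNN.realize a (θ.matMulRight n Wc) x = FNN.realize a θ (mulVecN n Wc x) := by
  unfold FNN.realize
  have hd : (θ.matMulRight n Wc).depth = θ.depth := rfl
  rw [hd]
  cases hD : θ.depth with
  | zero => rw [affine_matMulRight_zero]; rfl
  | succ D =>
      rw [hidden_matMulRight a θ n Wc x D, affine_matMulRight_succ θ n Wc D]

lemma hidden_matMulLeft (m : ℕ) (Wc : ℕ → ℕ → ℝ) (x : ℕ → ℝ) :
    ∀ k ≤ θ.depth, FNN.hidden a (θ.matMulLeft m Wc) k x = FNN.hidden a θ k x := by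
  intro k
  induction k with
  | zero => intro _; rfl
  | succ k ih =>
      intro hk
      funext i
      show a _ = a _
      rw [ih (by omega)]
      congr 1
      unfold FNN.affine FNN.matMulLeft
      have h1 : k ≠ θ.depth := by omega
      have h2 : k ≠ θ.depth + 1 := by omega
      simp [h1, h2]

lemma realize_matMulLeft (m : ℕ) (Wc : ℕ → ℕ → ℝ) (x : ℕ → ℝ) (i : ℕ) :
    FNN.realize a (θ.matMulLeft m Wc) x i
      = ∑ r ∈ Finset.range θ.out, Wc i r * FNN.realize a θ x r := by
  unfold FNN.realize
  have hd : (θ.matMulLeft m Wc).depth = θ.depth := rfl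
  rw [hd, hidden_matMulLeft a θ m Wc x θ.depth le_rfl]
  unfold FNN.affine FNN.matMulLeft
  have h2 : θ.depth ≠ θ.depth + 1 := by omega
  simp only [if_pos rfl, if_neg h2, if_true]
  simp only [Finset.sum_mul, Finset.mul_sum, mul_add, Finset.sum_add_distrib, mul_assoc]
  congr 1
  rw [Finset.sum_comm]

end AuxMat
section Aux2

/-- Two-condition block pick with offset-dependent value. -/
lemma sum_if_block' {M : Type*} [AddCommMonoid M] (f : ℕ → ℕ) {u m j : ℕ} (hm : m < u)
    (hj : j < f m) (g : ℕ → ℕ → M) :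
    (∑ m' ∈ Finset.range u,
        if offset f m' ≤ offset f m + j ∧ offset f m + j < offset f (m' + 1) then
          g m' (offset f m + j - offset f m')
        else 0) = g m j := by
  rw [Finset.sum_eq_single m]
  · rw [if_pos ⟨mem_block_left f m j, mem_block_right f hj⟩, Nat.add_sub_cancel_left]
  · intro m' _ hne
    rw [if_neg]
    rintro ⟨c1, c2⟩
    exact hne (block_uniq f c1 c2 (mem_block_left f m j) (mem_block_right f hj))
  · intro hmem; exact absurd (Finset.mem_range.2 hm) hmem

/-- Three-condition block pick. -/
lemma sum_if_block3 {M : Type*} [AddCommMonoid M] (f : ℕ → ℕ) {u m j : ℕ} (hm : m < u)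
    (hj : j < f m) (P : ℕ → Prop) [DecidablePred P] (g : ℕ → ℕ → M) :
    (∑ m' ∈ Finset.range u,
        if offset f m' ≤ offset f m + j ∧ offset f m + j < offset f (m' + 1) ∧
            P (offset f m + j - offset f m') then
          g m' (offset f m + j - offset f m')
        else 0) = if P j then g m j else 0 := by
  rw [Finset.sum_eq_single m]
  · rw [Nat.add_sub_cancel_left]
    by_cases hP : P j
    · rw [if_pos ⟨mem_block_left f m j, mem_block_right f hj, hP⟩, if_pos hP]
    · rw [if_neg (by tauto), if_neg hP]
  · intro m' _ hne
    rw [if_neg]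
    rintro ⟨c1, c2, -⟩
    exact hne (block_uniq f c1 c2 (mem_block_left f m j) (mem_block_right f hj))
  · intro hmem; exact absurd (Finset.mem_range.2 hm) hmem

/-- Four-condition (row and column blocks) pick. -/
lemma sum_if_block4 {M : Type*} [AddCommMonoid M] (f g4 : ℕ → ℕ) {u m m' i j : ℕ}
    (hm : m < u) (hm' : m' < u) (hi : i < f m) (hj : j < g4 m') (G : ℕ → ℕ → ℕ → M) :
    (∑ m'' ∈ Finset.range u,
        if offset f m'' ≤ offset f m + i ∧ offset f m + i < offset f (m'' + 1) ∧
            offset g4 m'' ≤ offset g4 m' + j ∧ offset g4 m' + j < offset g4 (m'' + 1) then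
          G m'' (offset f m + i - offset f m'') (offset g4 m' + j - offset g4 m'')
        else 0) = if m = m' then G m i j else 0 := by
  rw [Finset.sum_eq_single m]
  · rcases eq_or_ne m m' with rfl | hne
    · rw [if_pos ⟨mem_block_left f m i, mem_block_right f hi,
        mem_block_left g4 m j, mem_block_right g4 hj⟩, if_pos rfl,
        Nat.add_sub_cancel_left, Nat.add_sub_cancel_left]
    · rw [if_neg, if_neg hne]
      rintro ⟨-, -, c3, c4⟩
      exact hne (block_uniq g4 c3 c4 (mem_block_left g4 m' j) (mem_block_right g4 hj))
  · intro m'' _ hne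
    rw [if_neg]
    rintro ⟨c1, c2, -, -⟩
    exact hne (block_uniq f c1 c2 (mem_block_left f m i) (mem_block_right f hi))
  · intro hmem; exact absurd (Finset.mem_range.2 hm) hmem

lemma arch_eq_depth {θ₁ θ₂ : FNN} (h : θ₁.arch = θ₂.arch) : θ₁.depth = θ₂.depth := by
  have := congrArg List.length h
  simpa [FNN.arch] using this

lemma arch_eq_dims {θ₁ θ₂ : FNN} (h : θ₁.arch = θ₂.arch) {k : ℕ} (hk : k ≤ θ₂.depth + 1) :
    θ₁.dims k = θ₂.dims k := by
  have hd := arch_eq_depth h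
  have h2 : θ₁.arch[k]? = θ₂.arch[k]? := by rw [h]
  have hk1 : k < θ₁.depth + 2 := by omega
  have hk2 : k < θ₂.depth + 2 := by omega
  simpa [FNN.arch, hk1, hk2] using h2

lemma params_le {φ θ0 : FNN} {u : ℕ} (hu : 0 < u) (hd : φ.depth = θ0.depth)
    (hdims : ∀ k ≤ θ0.depth + 1, φ.dims k ≤ u * θ0.dims k) :
    φ.params ≤ u ^ 2 * θ0.params := by
  unfold FNN.params
  rw [hd, Finset.mul_sum]
  apply Finset.sum_le_sum
  intro k hk
  have hk' := Finset.mem_range.1 hk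
  have h1 := hdims (k + 1) (by omega)
  have h2 := hdims k (by omega)
  calc φ.dims (k + 1) * (φ.dims k + 1)
      ≤ (u * θ0.dims (k + 1)) * (u * θ0.dims k + u) :=
        Nat.mul_le_mul h1 (by omega)
    _ = u ^ 2 * (θ0.dims (k + 1) * (θ0.dims k + 1)) := by ring

lemma block_complexity_le {φ θ0 : FNN} {u : ℕ} (hu : 0 < u) (hd : φ.depth = θ0.depth)
    (hdims : ∀ k ≤ θ0.depth + 1, φ.dims k ≤ u * θ0.dims k) :
    φ.params + φ.out * φ.inp ≤ u ^ 2 * (θ0.params + θ0.out * θ0.inp) := by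
  have h1 := params_le hu hd hdims
  have h2 : φ.out * φ.inp ≤ u ^ 2 * (θ0.out * θ0.inp) := by
    have ho : φ.out ≤ u * θ0.out := by
      unfold FNN.out
      rw [hd]; exact hdims _ le_rfl
    have hi : φ.inp ≤ u * θ0.inp := hdims 0 (by omega)
    calc φ.out * φ.inp ≤ (u * θ0.out) * (u * θ0.inp) := Nat.mul_le_mul ho hi
      _ = u ^ 2 * (θ0.out * θ0.inp) := by ring
  rw [Nat.mul_add]
  exact Nat.add_le_add h1 h2

end Aux2
/-- Input-replication matrix `A₁`. -/
def repMat (Θ : ℕ → ResNet) (u : ℕ) : ℕ → ℕ → ℝ := fun r s =>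
  ∑ m ∈ Finset.range u,
    if offset (fun t => ((Θ t).blocks 0).dims 0) m ≤ r ∧
       r < offset (fun t => ((Θ t).blocks 0).dims 0) (m + 1) ∧
       s = r - offset (fun t => ((Θ t).blocks 0).dims 0) m then 1 else 0

/-- Output-summation matrix `A₂` with weights `h`. -/
def sumMat (Θ : ℕ → ResNet) (u : ℕ) (h : ℕ → ℝ) : ℕ → ℕ → ℝ := fun i r =>
  ∑ m ∈ Finset.range u,
    if offset (fun t => ((Θ t).blocks ((Θ 0).n - 1)).dims
          (((Θ 0).blocks ((Θ 0).n - 1)).depth + 1)) m ≤ r ∧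
       r < offset (fun t => ((Θ t).blocks ((Θ 0).n - 1)).dims
          (((Θ 0).blocks ((Θ 0).n - 1)).depth + 1)) (m + 1) ∧
       i = r - offset (fun t => ((Θ t).blocks ((Θ 0).n - 1)).dims
          (((Θ 0).blocks ((Θ 0).n - 1)).depth + 1)) m then h m else 0

/-- The ResNet computing `Σ_j h j • 𝓡_a (Θ j)`. -/
def psiNet (Θ : ℕ → ResNet) (u : ℕ) (h : ℕ → ℝ) : ResNet where
  n := (Θ 0).n
  blocks := fun i =>
    if i = 0 then
      (if (Θ 0).n = 1 then
        ((FNN.parallel u (fun j => (Θ j).blocks i)).matMulLeft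
            ((Θ 0).blocks ((Θ 0).n - 1)).out (sumMat Θ u h)).matMulRight
          ((Θ 0).blocks 0).inp (repMat Θ u)
      else
        (FNN.parallel u (fun j => (Θ j).blocks i)).matMulRight
          ((Θ 0).blocks 0).inp (repMat Θ u))
    else if i = (Θ 0).n - 1 then
      (FNN.parallel u (fun j => (Θ j).blocks i)).matMulLeft
        ((Θ 0).blocks ((Θ 0).n - 1)).out (sumMat Θ u h)
    else FNN.parallel u (fun j => (Θ j).blocks i)
  Γ := fun i r s =>
    if i = 0 then
      if (Θ 0).n = 1 then ∑ m ∈ Finset.range u, h m * (Θ m).Γ 0 r s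
      else
        ∑ m ∈ Finset.range u,
          if offset (fun t => ((Θ t).blocks 0).dims (((Θ 0).blocks 0).depth + 1)) m ≤ r ∧
             r < offset (fun t => ((Θ t).blocks 0).dims (((Θ 0).blocks 0).depth + 1)) (m + 1) then
            (Θ m).Γ 0 (r - offset (fun t => ((Θ t).blocks 0).dims
              (((Θ 0).blocks 0).depth + 1)) m) s
          else 0
    else if i = (Θ 0).n - 1 then
      ∑ m ∈ Finset.range u,
        if offset (fun t => ((Θ t).blocks i).dims 0) m ≤ s ∧
           s < offset (fun t => ((Θ t).blocks i).dims 0) (m + 1) then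
          h m * (Θ m).Γ i r (s - offset (fun t => ((Θ t).blocks i).dims 0) m)
        else 0
    else
      ∑ m ∈ Finset.range u,
        if offset (fun t => ((Θ t).blocks i).dims (((Θ 0).blocks i).depth + 1)) m ≤ r ∧
           r < offset (fun t => ((Θ t).blocks i).dims (((Θ 0).blocks i).depth + 1)) (m + 1) ∧
           offset (fun t => ((Θ t).blocks i).dims 0) m ≤ s ∧
           s < offset (fun t => ((Θ t).blocks i).dims 0) (m + 1) then
          (Θ m).Γ i (r - offset (fun t => ((Θ t).blocks i).dims
              (((Θ 0).blocks i).depth + 1)) m)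
            (s - offset (fun t => ((Θ t).blocks i).dims 0) m)
        else 0

lemma mulVecN_repMat (Θ : ℕ → ResNet) (u : ℕ) (x : ℕ → ℝ) {m j : ℕ} (hm : m < u)
    (hj : j < ((Θ m).blocks 0).dims 0)
    (hdim : ((Θ m).blocks 0).dims 0 = ((Θ 0).blocks 0).inp) :
    mulVecN ((Θ 0).blocks 0).inp (repMat Θ u) x
        (offset (fun t => ((Θ t).blocks 0).dims 0) m + j) = x j := by
  unfold mulVecN
  have hrep : ∀ s, repMat Θ u (offset (fun t => ((Θ t).blocks 0).dims 0) m + j) s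
      = if s = j then (1 : ℝ) else 0 := by
    intro s
    unfold repMat
    exact sum_if_block3 (fun t => ((Θ t).blocks 0).dims 0) hm hj (fun t => s = t)
      (fun _ _ => 1)
  simp only [hrep, ite_mul, one_mul, zero_mul]
  rw [Finset.sum_ite_eq' (Finset.range ((Θ 0).blocks 0).inp) j x,
    if_pos (Finset.mem_range.2 (hdim ▸ hj))]

lemma sum_sumMat (Θ : ℕ → ResNet) (u : ℕ) (h : ℕ → ℝ) (z : ℕ → ℝ) {r : ℕ}
    (hr : ∀ m < u, r < ((Θ m).blocks ((Θ 0).n - 1)).dims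
        (((Θ 0).blocks ((Θ 0).n - 1)).depth + 1)) :
    ∑ t ∈ Finset.range (offset (fun t => ((Θ t).blocks ((Θ 0).n - 1)).dims
        (((Θ 0).blocks ((Θ 0).n - 1)).depth + 1)) u),
      sumMat Θ u h r t * z t
      = ∑ m ∈ Finset.range u, h m *
          z (offset (fun t => ((Θ t).blocks ((Θ 0).n - 1)).dims
            (((Θ 0).blocks ((Θ 0).n - 1)).depth + 1)) m + r) := by
  rw [sum_range_offset]
  apply Finset.sum_congr rfl
  intro m hmr
  have hm := Finset.mem_range.1 hmr
  have hpick : ∀ j, j < ((Θ m).blocks ((Θ 0).n - 1)).dims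
      (((Θ 0).blocks ((Θ 0).n - 1)).depth + 1) →
      sumMat Θ u h r (offset (fun t => ((Θ t).blocks ((Θ 0).n - 1)).dims
        (((Θ 0).blocks ((Θ 0).n - 1)).depth + 1)) m + j) = if r = j then h m else 0 := by
    intro j hj
    unfold sumMat
    exact sum_if_block3 _ hm hj (fun t => r = t) (fun m' _ => h m')
  calc ∑ j ∈ Finset.range (((Θ m).blocks ((Θ 0).n - 1)).dims
        (((Θ 0).blocks ((Θ 0).n - 1)).depth + 1)),
        sumMat Θ u h r (offset (fun t => ((Θ t).blocks ((Θ 0).n - 1)).dims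
          (((Θ 0).blocks ((Θ 0).n - 1)).depth + 1)) m + j) *
          z (offset (fun t => ((Θ t).blocks ((Θ 0).n - 1)).dims
            (((Θ 0).blocks ((Θ 0).n - 1)).depth + 1)) m + j)
      = ∑ j ∈ Finset.range (((Θ m).blocks ((Θ 0).n - 1)).dims
          (((Θ 0).blocks ((Θ 0).n - 1)).depth + 1)),
          if j = r then h m * z (offset (fun t => ((Θ t).blocks ((Θ 0).n - 1)).dims
            (((Θ 0).blocks ((Θ 0).n - 1)).depth + 1)) m + j) else 0 := by
        apply Finset.sum_congr rfl
        intro j hjr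
        rw [hpick j (Finset.mem_range.1 hjr)]
        by_cases hje : j = r
        · subst hje; simp
        · rw [if_neg (fun e => hje e.symm), if_neg hje, zero_mul]
    _ = h m * z (offset (fun t => ((Θ t).blocks ((Θ 0).n - 1)).dims
          (((Θ 0).blocks ((Θ 0).n - 1)).depth + 1)) m + r) := by
        rw [Finset.sum_ite_eq' (Finset.range _) r
          (fun j => h m * z (offset (fun t => ((Θ t).blocks ((Θ 0).n - 1)).dims
            (((Θ 0).blocks ((Θ 0).n - 1)).depth + 1)) m + j)),
          if_pos (Finset.mem_range.2 (hr m hm))]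
lemma state_succ_eq (a : ℝ → ℝ) (Θ : ResNet) (x : ℕ → ℝ) (i r : ℕ) :
    ResNet.state a Θ x (i + 1) r
      = mulVecN (Θ.blocks i).inp (Θ.Γ i) (ResNet.state a Θ x i) r
        + FNN.realize a (Θ.blocks i) (ResNet.state a Θ x i) r := rfl
/-- For ResNets `Θ 0, …, Θ (u-1)` of equal length whose `i`-th
residual blocks all have the same layer-dimension vector, and scalars `h j`, there
exists a ResNet `ψ` whose realization equals `Σ_j h_j (𝓡_a Θ^j)` and whose
complexity satisfies `𝓟(ψ) ≤ u² 𝓟(Θ 0)`. -/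
theorem resnet_sum (a : ℝ → ℝ) (ha : Continuous a) (u : ℕ) (hu : 0 < u) (h : ℕ → ℝ)
    (Θ : ℕ → ResNet) (hn0 : 0 < (Θ 0).n)
    (hlen : ∀ j < u, (Θ j).n = (Θ 0).n)
    (harch : ∀ j < u, ∀ i < (Θ 0).n, ((Θ j).blocks i).arch = ((Θ 0).blocks i).arch)
    (hchain : ∀ j < u, ∀ i : ℕ, i + 1 < (Θ j).n →
        ((Θ j).blocks (i + 1)).inp = ((Θ j).blocks i).out) :
    ∃ ψ : ResNet,
      (∀ x : ℕ → ℝ, ∀ r < ((Θ 0).blocks ((Θ 0).n - 1)).out,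
        ResNet.realize a ψ x r =
          ∑ j ∈ Finset.range u, h j * ResNet.realize a (Θ j) x r) ∧
      ψ.complexity ≤ u ^ 2 * (Θ 0).complexity := by
  classical
  have hdeq : ∀ i < (Θ 0).n, ∀ j < u, ((Θ j).blocks i).depth = ((Θ 0).blocks i).depth :=
    fun i hi j hj => arch_eq_depth (harch j hj i hi)
  have hdimeq : ∀ i < (Θ 0).n, ∀ j < u, ∀ k, k ≤ ((Θ 0).blocks i).depth + 1 →
      ((Θ j).blocks i).dims k = ((Θ 0).blocks i).dims k :=
    fun i hi j hj k hk => arch_eq_dims (harch j hj i hi) hk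
  have houtd : ∀ i < (Θ 0).n, ∀ j < u,
      ((Θ j).blocks i).out = ((Θ j).blocks i).dims (((Θ 0).blocks i).depth + 1) := by
    intro i hi j hj
    show ((Θ j).blocks i).dims (((Θ j).blocks i).depth + 1) = _
    rw [hdeq i hi j hj]
  refine ⟨psiNet Θ u h, ?_, ?_⟩
  · intro x r hr
    have hio : ∀ i, i + 1 < (Θ 0).n → ∀ t < u,
        ((Θ t).blocks (i + 1)).dims 0
          = ((Θ t).blocks i).dims (((Θ 0).blocks i).depth + 1) := by
      intro i hi t ht
      have h3 : ((Θ t).blocks (i + 1)).inp = ((Θ t).blocks i).out :=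
        hchain t ht i (by rw [hlen t ht]; omega)
      calc ((Θ t).blocks (i + 1)).dims 0 = ((Θ t).blocks i).out := h3
        _ = _ := houtd i (by omega) t ht
    -- main induction over the first `n - 1` blocks
    have key : ∀ i, i + 1 < (Θ 0).n → ∀ m, m < u →
        ∀ r', r' < ((Θ m).blocks i).dims (((Θ 0).blocks i).depth + 1) →
        ResNet.state a (psiNet Θ u h) x (i + 1)
            (offset (fun t => ((Θ t).blocks i).dims (((Θ 0).blocks i).depth + 1)) m + r')
          = ResNet.state a (Θ m) x (i + 1) r' := by
      intro i
      induction i with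
      | zero =>
          intro h1 m hm r' hr'
          have hN1 : (Θ 0).n ≠ 1 := by omega
          have hblock : (psiNet Θ u h).blocks 0
              = (FNN.parallel u (fun j => (Θ j).blocks 0)).matMulRight
                  ((Θ 0).blocks 0).inp (repMat Θ u) := by
            simp only [psiNet]
            rw [if_pos trivial, if_neg hN1]
          simp only [ResNet.state]
          congr 1
          · rw [hblock]
            have hinp : ((FNN.parallel u (fun j => (Θ j).blocks 0)).matMulRight
                ((Θ 0).blocks 0).inp (repMat Θ u)).inp = ((Θ 0).blocks 0).inp := rfl
            rw [hinp]
            have hG : ∀ s, (psiNet Θ u h).Γ 0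
                (offset (fun t => ((Θ t).blocks 0).dims
                  (((Θ 0).blocks 0).depth + 1)) m + r') s
                = (Θ m).Γ 0 r' s := by
              intro s
              simp only [psiNet]
              rw [if_pos trivial, if_neg hN1]
              exact sum_if_block' (fun t => ((Θ t).blocks 0).dims
                (((Θ 0).blocks 0).depth + 1)) hm hr' (fun m' t => (Θ m').Γ 0 t s)
            unfold mulVecN
            have hrange : ((Θ m).blocks 0).inp = ((Θ 0).blocks 0).inp :=
              hdimeq 0 hn0 m hm 0 (by omega)
            rw [hrange]
            exact Finset.sum_congr rfl fun s _ => by rw [hG s]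
          · rw [hblock, realize_matMulRight]
            exact realize_parallel a (fun j => (Θ j).blocks 0) u hm
              (fun m' hm' => hdeq 0 hn0 m' hm')
              (by rw [hdeq 0 hn0 m hm]; exact hr')
              _ (fun _ => x)
              (fun m' hm' j hj => mulVecN_repMat Θ u x hm' hj
                (hdimeq 0 hn0 m' hm' 0 (by omega)))
      | succ i ih =>
          intro h2 m hm r' hr'
          have hi1 : i + 1 < (Θ 0).n := by omega
          have hb0 : ¬ (i + 1 = 0) := by omega
          have hbN : ¬ (i + 1 = (Θ 0).n - 1) := by omega
          have hblock : (psiNet Θ u h).blocks (i + 1)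
              = FNN.parallel u (fun j => (Θ j).blocks (i + 1)) := by
            simp only [psiNet]
            rw [if_neg hb0, if_neg hbN]
          have hagree : ∀ m' < u, ∀ j, j < ((Θ m').blocks (i + 1)).dims 0 →
              ResNet.state a (psiNet Θ u h) x (i + 1)
                  (offset (fun t => ((Θ t).blocks (i + 1)).dims 0) m' + j)
                = ResNet.state a (Θ m') x (i + 1) j := by
            intro m' hm' j hj
            have hoff : offset (fun t => ((Θ t).blocks (i + 1)).dims 0) m'
                = offset (fun t => ((Θ t).blocks i).dims
                    (((Θ 0).blocks i).depth + 1)) m' :=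
              offset_congr (fun t ht => hio i (by omega) t (lt_trans ht hm'))
            rw [hoff]
            exact ih (by omega) m' hm' j (by rw [← hio i (by omega) m' hm']; exact hj)
          rw [state_succ_eq a (psiNet Θ u h) x (i + 1),
            state_succ_eq a (Θ m) x (i + 1)]
          congr 1
          · rw [hblock]
            have hinp : (FNN.parallel u (fun j => (Θ j).blocks (i + 1))).inp
                = offset (fun t => ((Θ t).blocks (i + 1)).dims 0) u := rfl
            rw [hinp]
            unfold mulVecN
            rw [sum_range_offset]
            have hG : ∀ m'', m'' < u → ∀ s', s' < ((Θ m'').blocks (i + 1)).dims 0 →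
                (psiNet Θ u h).Γ (i + 1)
                  (offset (fun t => ((Θ t).blocks (i + 1)).dims
                      (((Θ 0).blocks (i + 1)).depth + 1)) m + r')
                  (offset (fun t => ((Θ t).blocks (i + 1)).dims 0) m'' + s')
                = if m = m'' then (Θ m).Γ (i + 1) r' s' else 0 := by
              intro m'' hm'' s' hs'
              simp only [psiNet]
              rw [if_neg hb0, if_neg hbN]
              exact sum_if_block4 _ _ hm hm'' hr' hs'
                (fun mm t t' => (Θ mm).Γ (i + 1) t t')
            rw [Finset.sum_eq_single m]
            · apply Finset.sum_congr rfl
              intro s' hs'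
              rw [hG m hm s' (Finset.mem_range.1 hs'), if_pos rfl,
                hagree m hm s' (Finset.mem_range.1 hs')]
            · intro m'' hm''r hne
              apply Finset.sum_eq_zero
              intro s' hs'
              rw [hG m'' (Finset.mem_range.1 hm''r) s' (Finset.mem_range.1 hs'),
                if_neg (fun e => hne e.symm), zero_mul]
            · intro hmem; exact absurd (Finset.mem_range.2 hm) hmem
          · rw [hblock]
            exact realize_parallel a (fun j => (Θ j).blocks (i + 1)) u hm
              (fun m' hm' => hdeq (i + 1) hi1 m' hm')
              (by rw [hdeq (i + 1) hi1 m hm]; exact hr')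
              _ (fun m' => ResNet.state a (Θ m') x (i + 1)) hagree
    -- bounds on `r` for every member of the family
    have hrm : ∀ m' < u, r < ((Θ m').blocks ((Θ 0).n - 1)).dims
        (((Θ 0).blocks ((Θ 0).n - 1)).depth + 1) := by
      intro m' hm'
      have hlt : (Θ 0).n - 1 < (Θ 0).n := by omega
      rw [hdimeq ((Θ 0).n - 1) hlt m' hm' _ le_rfl]
      exact hr
    by_cases hN1 : (Θ 0).n = 1
    · -- single residual block
      have hsub : (Θ 0).n - 1 = 0 := by omega
      have hblock : (psiNet Θ u h).blocks 0
          = ((FNN.parallel u (fun j => (Θ j).blocks 0)).matMulLeft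
              ((Θ 0).blocks ((Θ 0).n - 1)).out (sumMat Θ u h)).matMulRight
            ((Θ 0).blocks 0).inp (repMat Θ u) := by
        simp only [psiNet]
        rw [if_pos trivial, if_pos hN1]
      have hrm0 : ∀ m' < u, r < ((Θ m').blocks 0).dims
          (((Θ 0).blocks 0).depth + 1) := by
        intro m' hm'
        have := hrm m' hm'
        rwa [hsub] at this
      show ResNet.state a (psiNet Θ u h) x ((psiNet Θ u h).n) r = _
      have hpn : (psiNet Θ u h).n = 0 + 1 := by
        show (Θ 0).n = 0 + 1
        omega
      rw [hpn]
      simp only [ResNet.state]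
      have hreal : ∀ m' < u,
          FNN.realize a (FNN.parallel u (fun j => (Θ j).blocks 0))
              (mulVecN ((Θ 0).blocks 0).inp (repMat Θ u) x)
              (offset (fun t => ((Θ t).blocks 0).dims
                (((Θ 0).blocks 0).depth + 1)) m' + r)
            = FNN.realize a ((Θ m').blocks 0) x r := by
        intro m' hm'
        exact realize_parallel a (fun j => (Θ j).blocks 0) u hm'
          (fun m'' hm'' => hdeq 0 hn0 m'' hm'')
          (by rw [hdeq 0 hn0 m' hm']; exact hrm0 m' hm')
          _ (fun _ => x)
          (fun m'' hm'' j hj => mulVecN_repMat Θ u x hm'' hj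
            (hdimeq 0 hn0 m'' hm'' 0 (by omega)))
      have hs := sum_sumMat Θ u h
        (FNN.realize a (FNN.parallel u (fun j => (Θ j).blocks 0))
          (mulVecN ((Θ 0).blocks 0).inp (repMat Θ u) x)) hrm
      simp only [hsub] at hs
      calc mulVecN ((psiNet Θ u h).blocks 0).inp ((psiNet Θ u h).Γ 0)
              (ResNet.state a (psiNet Θ u h) x 0) r
            + FNN.realize a ((psiNet Θ u h).blocks 0)
              (ResNet.state a (psiNet Θ u h) x 0) r
          = ∑ m ∈ Finset.range u, h m *
              (mulVecN ((Θ m).blocks 0).inp ((Θ m).Γ 0) x r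
                + FNN.realize a ((Θ m).blocks 0) x r) := by
            have hst0 : ResNet.state a (psiNet Θ u h) x 0 = x := rfl
            rw [hst0, hblock, realize_matMulRight, realize_matMulLeft]
            have houtpar : (FNN.parallel u (fun j => (Θ j).blocks 0)).out
                = offset (fun t => ((Θ t).blocks 0).dims
                  (((Θ 0).blocks 0).depth + 1)) u := rfl
            rw [houtpar, hs]
            have hGam : mulVecN (((FNN.parallel u (fun j => (Θ j).blocks 0)).matMulLeft
                  ((Θ 0).blocks ((Θ 0).n - 1)).out (sumMat Θ u h)).matMulRight
                ((Θ 0).blocks 0).inp (repMat Θ u)).inp ((psiNet Θ u h).Γ 0) x r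
                = ∑ m ∈ Finset.range u, h m *
                    mulVecN ((Θ m).blocks 0).inp ((Θ m).Γ 0) x r := by
              have hinp : (((FNN.parallel u (fun j => (Θ j).blocks 0)).matMulLeft
                  ((Θ 0).blocks ((Θ 0).n - 1)).out (sumMat Θ u h)).matMulRight
                ((Θ 0).blocks 0).inp (repMat Θ u)).inp = ((Θ 0).blocks 0).inp := rfl
              rw [hinp]
              have hGa : ∀ s, (psiNet Θ u h).Γ 0 r s
                  = ∑ m ∈ Finset.range u, h m * (Θ m).Γ 0 r s := by
                intro s
                simp only [psiNet]
                rw [if_pos trivial, if_pos hN1]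
              unfold mulVecN
              simp only [hGa, Finset.sum_mul, mul_assoc]
              rw [Finset.sum_comm]
              apply Finset.sum_congr rfl
              intro m hmr
              rw [← Finset.mul_sum]
              congr 1
              have hrange : ((Θ m).blocks 0).inp = ((Θ 0).blocks 0).inp :=
                hdimeq 0 hn0 m (Finset.mem_range.1 hmr) 0 (by omega)
              rw [hrange]
            rw [hGam, ← Finset.sum_add_distrib]
            apply Finset.sum_congr rfl
            intro m hmr
            rw [hreal m (Finset.mem_range.1 hmr), mul_add]
        _ = ∑ j ∈ Finset.range u, h j * ResNet.realize a (Θ j) x r := by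
            apply Finset.sum_congr rfl
            intro j hjr
            have hj := Finset.mem_range.1 hjr
            congr 1
            show _ = ResNet.state a (Θ j) x ((Θ j).n) r
            rw [hlen j hj, hN1]
            simp only [ResNet.state]
    · -- at least two residual blocks
      obtain ⟨M, hM⟩ : ∃ M, (Θ 0).n = M + 2 := ⟨(Θ 0).n - 2, by omega⟩
      have hsub : (Θ 0).n - 1 = M + 1 := by omega
      have hb0 : ¬ (M + 1 = 0) := by omega
      have hbN : M + 1 = (Θ 0).n - 1 := by omega
      have hblock : (psiNet Θ u h).blocks (M + 1)
          = (FNN.parallel u (fun j => (Θ j).blocks (M + 1))).matMulLeft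
              ((Θ 0).blocks ((Θ 0).n - 1)).out (sumMat Θ u h) := by
        simp only [psiNet]
        rw [if_neg hb0, if_pos hbN]
      have hrm1 : ∀ m' < u, r < ((Θ m').blocks (M + 1)).dims
          (((Θ 0).blocks (M + 1)).depth + 1) := by
        intro m' hm'
        have := hrm m' hm'
        rwa [hsub] at this
      have hagree : ∀ m' < u, ∀ j, j < ((Θ m').blocks (M + 1)).dims 0 →
          ResNet.state a (psiNet Θ u h) x (M + 1)
              (offset (fun t => ((Θ t).blocks (M + 1)).dims 0) m' + j)
            = ResNet.state a (Θ m') x (M + 1) j := by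
        intro m' hm' j hj
        have hoff : offset (fun t => ((Θ t).blocks (M + 1)).dims 0) m'
            = offset (fun t => ((Θ t).blocks M).dims
                (((Θ 0).blocks M).depth + 1)) m' :=
          offset_congr (fun t ht => hio M (by omega) t (lt_trans ht hm'))
        rw [hoff]
        exact key M (by omega) m' hm' j (by rw [← hio M (by omega) m' hm']; exact hj)
      have hreal : ∀ m' < u,
          FNN.realize a (FNN.parallel u (fun j => (Θ j).blocks (M + 1)))
              (ResNet.state a (psiNet Θ u h) x (M + 1))
              (offset (fun t => ((Θ t).blocks (M + 1)).dims
                (((Θ 0).blocks (M + 1)).depth + 1)) m' + r)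
            = FNN.realize a ((Θ m').blocks (M + 1))
                (ResNet.state a (Θ m') x (M + 1)) r := by
        intro m' hm'
        exact realize_parallel a (fun j => (Θ j).blocks (M + 1)) u hm'
          (fun m'' hm'' => hdeq (M + 1) (by omega) m'' hm'')
          (by rw [hdeq (M + 1) (by omega) m' hm']; exact hrm1 m' hm')
          _ (fun m'' => ResNet.state a (Θ m'') x (M + 1)) hagree
      show ResNet.state a (psiNet Θ u h) x ((psiNet Θ u h).n) r = _
      have hpn : (psiNet Θ u h).n = (M + 1) + 1 := by
        show (Θ 0).n = (M + 1) + 1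
        omega
      rw [hpn, state_succ_eq a (psiNet Θ u h) x (M + 1)]
      have hs := sum_sumMat Θ u h
        (FNN.realize a (FNN.parallel u (fun j => (Θ j).blocks (M + 1)))
          (ResNet.state a (psiNet Θ u h) x (M + 1))) hrm
      simp only [hsub] at hs
      calc mulVecN ((psiNet Θ u h).blocks (M + 1)).inp ((psiNet Θ u h).Γ (M + 1))
              (ResNet.state a (psiNet Θ u h) x (M + 1)) r
            + FNN.realize a ((psiNet Θ u h).blocks (M + 1))
              (ResNet.state a (psiNet Θ u h) x (M + 1)) r
          = ∑ m ∈ Finset.range u, h m *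
              (mulVecN ((Θ m).blocks (M + 1)).inp ((Θ m).Γ (M + 1))
                  (ResNet.state a (Θ m) x (M + 1)) r
                + FNN.realize a ((Θ m).blocks (M + 1))
                  (ResNet.state a (Θ m) x (M + 1)) r) := by
            rw [hblock, realize_matMulLeft]
            have houtpar : (FNN.parallel u (fun j => (Θ j).blocks (M + 1))).out
                = offset (fun t => ((Θ t).blocks (M + 1)).dims
                  (((Θ 0).blocks (M + 1)).depth + 1)) u := rfl
            rw [houtpar, hs]
            have hGam : mulVecN ((FNN.parallel u (fun j => (Θ j).blocks (M + 1))).matMulLeft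
                  ((Θ 0).blocks ((Θ 0).n - 1)).out (sumMat Θ u h)).inp
                ((psiNet Θ u h).Γ (M + 1)) (ResNet.state a (psiNet Θ u h) x (M + 1)) r
                = ∑ m ∈ Finset.range u, h m *
                    mulVecN ((Θ m).blocks (M + 1)).inp ((Θ m).Γ (M + 1))
                      (ResNet.state a (Θ m) x (M + 1)) r := by
              have hinp : ((FNN.parallel u (fun j => (Θ j).blocks (M + 1))).matMulLeft
                  ((Θ 0).blocks ((Θ 0).n - 1)).out (sumMat Θ u h)).inp
                  = offset (fun t => ((Θ t).blocks (M + 1)).dims 0) u := rfl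
              rw [hinp]
              unfold mulVecN
              rw [sum_range_offset]
              apply Finset.sum_congr rfl
              intro m hmr
              have hm := Finset.mem_range.1 hmr
              have hGa : ∀ s', s' < ((Θ m).blocks (M + 1)).dims 0 →
                  (psiNet Θ u h).Γ (M + 1) r
                    (offset (fun t => ((Θ t).blocks (M + 1)).dims 0) m + s')
                  = h m * (Θ m).Γ (M + 1) r s' := by
                intro s' hs'
                simp only [psiNet]
                rw [if_neg hb0, if_pos hbN]
                exact sum_if_block' (fun t => ((Θ t).blocks (M + 1)).dims 0) hm hs'
                  (fun m' t => h m' * (Θ m').Γ (M + 1) r t)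
              calc ∑ j ∈ Finset.range (((Θ m).blocks (M + 1)).dims 0),
                    (psiNet Θ u h).Γ (M + 1) r
                      (offset (fun t => ((Θ t).blocks (M + 1)).dims 0) m + j) *
                      ResNet.state a (psiNet Θ u h) x (M + 1)
                        (offset (fun t => ((Θ t).blocks (M + 1)).dims 0) m + j)
                  = ∑ j ∈ Finset.range (((Θ m).blocks (M + 1)).dims 0),
                      h m * ((Θ m).Γ (M + 1) r j *
                        ResNet.state a (Θ m) x (M + 1) j) := by
                    apply Finset.sum_congr rfl
                    intro j hjr
                    rw [hGa j (Finset.mem_range.1 hjr),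
                      hagree m hm j (Finset.mem_range.1 hjr), mul_assoc]
                _ = h m * ∑ j ∈ Finset.range (((Θ m).blocks (M + 1)).inp),
                      (Θ m).Γ (M + 1) r j * ResNet.state a (Θ m) x (M + 1) j := by
                    rw [Finset.mul_sum]
                    rfl
            rw [hGam, ← Finset.sum_add_distrib]
            apply Finset.sum_congr rfl
            intro m hmr
            rw [hreal m (Finset.mem_range.1 hmr), mul_add]
        _ = ∑ j ∈ Finset.range u, h j * ResNet.realize a (Θ j) x r := by
            apply Finset.sum_congr rfl
            intro j hjr
            have hj := Finset.mem_range.1 hjr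
            congr 1
            show _ = ResNet.state a (Θ j) x ((Θ j).n) r
            rw [hlen j hj, hM]
            simp only [ResNet.state]
  · -- complexity bound
    have hψn : (psiNet Θ u h).n = (Θ 0).n := rfl
    unfold ResNet.complexity
    rw [hψn, Finset.mul_sum]
    apply Finset.sum_le_sum
    intro i hir
    have hi := Finset.mem_range.1 hir
    have hpd : (FNN.parallel u (fun j => (Θ j).blocks i)).depth
        = ((Θ 0).blocks i).depth := rfl
    have hpar : ∀ k, k ≤ ((Θ 0).blocks i).depth + 1 →
        (FNN.parallel u (fun j => (Θ j).blocks i)).dims k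
          = u * ((Θ 0).blocks i).dims k := by
      intro k hk
      show (∑ m ∈ Finset.range u, ((Θ m).blocks i).dims k) = _
      rw [Finset.sum_congr rfl
        (fun m hmr => hdimeq i hi m (Finset.mem_range.1 hmr) k hk)]
      simp [Finset.sum_const, Finset.card_range]
    have hinp0 : ((Θ 0).blocks 0).inp ≤ u * ((Θ 0).blocks 0).dims 0 :=
      Nat.le_mul_of_pos_left _ hu
    have hlast : (Θ 0).n - 1 < (Θ 0).n := by omega
    have houtL : ((Θ 0).blocks ((Θ 0).n - 1)).out
        ≤ u * ((Θ 0).blocks ((Θ 0).n - 1)).dims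
            (((Θ 0).blocks ((Θ 0).n - 1)).depth + 1) :=
      Nat.le_mul_of_pos_left _ hu
    by_cases hi0 : i = 0
    · subst hi0
      by_cases hN1 : (Θ 0).n = 1
      · have hsub : (Θ 0).n - 1 = 0 := by omega
        have hblock : (psiNet Θ u h).blocks 0
            = ((FNN.parallel u (fun j => (Θ j).blocks 0)).matMulLeft
                ((Θ 0).blocks ((Θ 0).n - 1)).out (sumMat Θ u h)).matMulRight
              ((Θ 0).blocks 0).inp (repMat Θ u) := by
          simp only [psiNet]
          rw [if_pos trivial, if_pos hN1]
        rw [hblock]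
        refine block_complexity_le hu rfl fun k hk => ?_
        simp only [FNN.matMulRight, FNN.matMulLeft]
        rw [hpd]
        split_ifs with h1 h2
        · subst h1; exact hinp0
        · subst h2
          rw [hsub]
          have := houtL
          rwa [hsub] at this
        · exact le_of_eq (hpar k hk)
      · have hblock : (psiNet Θ u h).blocks 0
            = (FNN.parallel u (fun j => (Θ j).blocks 0)).matMulRight
                ((Θ 0).blocks 0).inp (repMat Θ u) := by
          simp only [psiNet]
          rw [if_pos trivial, if_neg hN1]
        rw [hblock]
        refine block_complexity_le hu rfl fun k hk => ?_
        simp only [FNN.matMulRight]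
        split_ifs with h1
        · subst h1; exact hinp0
        · exact le_of_eq (hpar k hk)
    · by_cases hiN : i = (Θ 0).n - 1
      · have hblock : (psiNet Θ u h).blocks i
            = (FNN.parallel u (fun j => (Θ j).blocks i)).matMulLeft
                ((Θ 0).blocks ((Θ 0).n - 1)).out (sumMat Θ u h) := by
          simp only [psiNet]
          rw [if_neg hi0, if_pos hiN]
        rw [hblock]
        refine block_complexity_le hu rfl fun k hk => ?_
        simp only [FNN.matMulLeft]
        rw [hpd]
        split_ifs with h1
        · subst h1
          have := houtL
          rw [← hiN] at this ⊢
          exact this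
        · exact le_of_eq (hpar k hk)
      · have hblock : (psiNet Θ u h).blocks i
            = FNN.parallel u (fun j => (Θ j).blocks i) := by
          simp only [psiNet]
          rw [if_neg hi0, if_neg hiN]
        rw [hblock]
        refine block_complexity_le hu rfl fun k hk => ?_
        exact le_of_eq (hpar k hk)
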